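/- (The canonical pebble-slide move.) In the (k,ℓ)-pebble game with colors, any sequence of pebble-slide moves from a reachable configuration that makes a given add-edge move possible can be replaced by a sequence of pebble-slide moves from the same configuration, none of which creates a monochromatic cycle, after which the same add-edge move is possible. -/

import Mathlib

open scoped Classical

namespace PebbleGame

/-- A configuration of the `(k,ℓ)`-pebble game with colors: a directed multigraph
whose edges are records `(tail, head, color)` (the color of an edge is the color of
the unique pebble lying on it), together with the multiset of colors of the pebbles
sitting on each vertex. -/
structure PGConfig (V : Type) (k : ℕ) where
  edges : Multiset (V × V × Fin k)
  pebs : V → Multiset (Fin k)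

variable {V : Type} [DecidableEq V] {k ℓ : ℕ}

/-- The configuration resulting from an add-edge move: a pebble of color `c` is picked
up from `v`, the directed edge `vw` is added and the pebble is placed on it. -/
def addEdgeCfg (H : PGConfig V k) (v w : V) (c : Fin k) : PGConfig V k :=
  ⟨(v, w, c) ::ₘ H.edges, Function.update H.pebs v ((H.pebs v).erase c)⟩

/-- The configuration resulting from a pebble-slide move along the edge `(v, w, c)`,
using a pebble of color `c'` on `w`: the edge `vw` is replaced by `wv`, the pebble of
color `c` that was on the edge goes to `v`, and the pebble of color `c'` from `w` is
placed on the new edge `wv`. -/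
def slideCfg (H : PGConfig V k) (v w : V) (c c' : Fin k) : PGConfig V k :=
  ⟨(w, v, c') ::ₘ H.edges.erase (v, w, c),
    Function.update (Function.update H.pebs w ((H.pebs w).erase c')) v
      (c ::ₘ Function.update H.pebs w ((H.pebs w).erase c') v)⟩

/-- A legal move of the `(k,ℓ)`-pebble game with colors. -/
inductive Step (k ℓ : ℕ) : PGConfig V k → PGConfig V k → Prop
  | add (H : PGConfig V k) (v w : V) (c : Fin k)
      (hpeb : ℓ + 1 ≤ ∑ u ∈ ({v, w} : Finset V), (H.pebs u).card)
      (hc : c ∈ H.pebs v) :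
      Step k ℓ H (addEdgeCfg H v w c)
  | slide (H : PGConfig V k) (v w : V) (c c' : Fin k)
      (he : (v, w, c) ∈ H.edges)
      (hc : c' ∈ H.pebs w) :
      Step k ℓ H (slideCfg H v w c c')

/-- The initial configuration: no edges, and one pebble of each of the `k` colors on
every vertex. -/
def initCfg (V : Type) [DecidableEq V] [Fintype V] (k : ℕ) : PGConfig V k :=
  ⟨0, fun _ => Finset.univ.val⟩

/-- A configuration is reachable if it arises from the initial configuration by a
finite sequence of legal moves. -/
def Reachable [Fintype V] (k ℓ : ℕ) (H : PGConfig V k) : Prop :=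
  Relation.ReflTransGen (Step k ℓ) (initCfg V k) H

/-- The underlying undirected multigraph (multiset of edges) of a configuration. -/
def undirected (H : PGConfig V k) : Multiset (Sym2 V) :=
  H.edges.map fun e => s(e.1, e.2.1)

/-- The (undirected) edges of a configuration carrying a pebble of color `c`. -/
def monoEdges (H : PGConfig V k) (c : Fin k) : Multiset (Sym2 V) :=
  (H.edges.filter fun e => e.2.2 = c).map fun e => s(e.1, e.2.1)

/-- The undirected edges of color `c` among a multiset `F` of directed colored
edges. -/
def monoOf (F : Multiset (V × V × Fin k)) (c : Fin k) : Multiset (Sym2 V) :=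
  (F.filter fun e => e.2.2 = c).map fun e => s(e.1, e.2.1)

/-- `G` (a multiset of undirected edges on the fixed finite vertex set `V`) is a
`(k,ℓ)`-pebble-game graph if it is the underlying undirected multigraph of some
reachable configuration. -/
def PebbleGameGraph [Fintype V] (k ℓ : ℕ) (E : Multiset (Sym2 V)) : Prop :=
  ∃ H : PGConfig V k, Reachable k ℓ H ∧ undirected H = E

/-- The edges of `E` spanned by the vertex set `S` (both endpoints in `S`). -/
def spanned (E : Multiset (Sym2 V)) (S : Finset V) : Multiset (Sym2 V) :=
  E.filter fun e => e ∈ S.sym2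

/-- A multigraph is `(k,ℓ)`-sparse if every nonempty set of `n'` vertices spans at
most `k n' - ℓ` edges. -/
def Sparse (k ℓ : ℕ) (E : Multiset (Sym2 V)) : Prop :=
  ∀ S : Finset V, S.Nonempty → (spanned E S).card ≤ k * S.card - ℓ

/-- A multigraph is `(k,ℓ)`-tight if it is `(k,ℓ)`-sparse with exactly `k|V| - ℓ`
edges. -/
def Tight [Fintype V] (k ℓ : ℕ) (E : Multiset (Sym2 V)) : Prop :=
  Sparse k ℓ E ∧ E.card = k * Fintype.card V - ℓ

/-- Connectivity (as undirected multigraphs) via the edges of `F`. -/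
def Conn (F : Multiset (Sym2 V)) : V → V → Prop :=
  Relation.ReflTransGen fun a b => s(a, b) ∈ F

/-- The connected components of the graph with vertex set `S` and edge multiset `F`
(whose edges are assumed to be spanned by `S`), as a finset of vertex sets. -/
noncomputable def components (S : Finset V) (F : Multiset (Sym2 V)) : Finset (Finset V) :=
  S.image fun v => S.filter fun u => Conn F v u

/-- The tree-pieces of the graph `(S, F)`: connected components that contain no cycle,
i.e. whose spanned edge count is exactly one less than their vertex count (an isolated
vertex is a tree-piece). -/
noncomputable def treePieces (S : Finset V) (F : Multiset (Sym2 V)) : Finset (Finset V) :=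
  (components S F).filter fun C => (spanned F C).card + 1 = C.card

/-- The number of tree-pieces of the graph `(S, F)`. -/
noncomputable def treePieceCount (S : Finset V) (F : Multiset (Sym2 V)) : ℕ :=
  (treePieces S F).card

/-- A multigraph contains a cycle iff some nonempty vertex set spans at least as many
edges as it has vertices. -/
def HasCycle (F : Multiset (Sym2 V)) : Prop :=
  ∃ S : Finset V, S.Nonempty ∧ S.card ≤ (spanned F S).card

/-- A spanning tree on the whole (finite) vertex set: connected with `|V| - 1` edges. -/
def IsSpanningTree [Fintype V] (T : Multiset (Sym2 V)) : Prop :=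
  (∀ u v : V, Conn T u v) ∧ T.card + 1 = Fintype.card V

/-- A spanning map-graph: the edges admit an orientation in which every vertex has
out-degree exactly one. -/
def IsSpanningMapGraph [Fintype V] (T : Multiset (Sym2 V)) : Prop :=
  ∃ M : Multiset (V × V), M.map (fun p => s(p.1, p.2)) = T ∧
    ∀ v : V, (M.filter fun p => p.1 = v).card = 1

/-- A `(k,ℓ)`-maps-and-trees decomposition: `ℓ` edge-disjoint spanning trees and
`k - ℓ` edge-disjoint spanning map-graphs whose union is `E`. -/
def MapsAndTrees [Fintype V] (k ℓ : ℕ) (E : Multiset (Sym2 V)) : Prop :=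
  ∃ (T : Fin ℓ → Multiset (Sym2 V)) (M : Fin (k - ℓ) → Multiset (Sym2 V)),
    ((∑ i, T i) + ∑ j, M j) = E ∧ (∀ i, IsSpanningTree (T i)) ∧
      ∀ j, IsSpanningMapGraph (M j)

/-- `(S, T)` is a (possibly single-vertex) tree: nonempty vertex set `S`, edges spanned
by `S`, connected on `S`, and `|T| + 1 = |S|`. -/
def IsTreeOn (S : Finset V) (T : Multiset (Sym2 V)) : Prop :=
  S.Nonempty ∧ (∀ e ∈ T, e ∈ S.sym2) ∧ (∀ u ∈ S, ∀ v ∈ S, Conn T u v) ∧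
    T.card + 1 = S.card

/-- An `ℓTk` decomposition of `E`: `ℓ` edge-disjoint (not necessarily spanning,
possibly single-vertex) trees `(S i, T i)` whose edges partition `E`, such that every
vertex belongs to exactly `k` of the trees. -/
def LTkDecomp (k ℓ : ℕ) (E : Multiset (Sym2 V)) (S : Fin ℓ → Finset V)
    (T : Fin ℓ → Multiset (Sym2 V)) : Prop :=
  (∑ i, T i) = E ∧ (∀ i, IsTreeOn (S i) (T i)) ∧
    ∀ v : V, (Finset.univ.filter fun i => v ∈ S i).card = k

/-- A proper `ℓTk`: an `ℓTk` decomposition such that every nonempty subgraph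
(vertex set `U`, together with a sub-multiset `F i` of each tree spanned by `U`)
contains at least `ℓ` tree-pieces, the tree-pieces being the connected components of
the intersections of the trees with the subgraph. -/
def ProperLTk (k ℓ : ℕ) (E : Multiset (Sym2 V)) : Prop :=
  ∃ (S : Fin ℓ → Finset V) (T : Fin ℓ → Multiset (Sym2 V)),
    LTkDecomp k ℓ E S T ∧
      ∀ U : Finset V, U.Nonempty →
        ∀ F : Fin ℓ → Multiset (Sym2 V),
          (∀ i, F i ≤ T i) → (∀ i, ∀ e ∈ F i, e ∈ U.sym2) →
            ℓ ≤ ∑ i, treePieceCount (U ∩ S i) (F i)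

/-- One pebble-slide move (as a relation between configurations). -/
def SlideRel (k : ℕ) (A B : PGConfig V k) : Prop :=
  ∃ (v w : V) (c c' : Fin k), (v, w, c) ∈ A.edges ∧ c' ∈ A.pebs w ∧
    B = slideCfg A v w c c'

/-- A canonical move of the `(k,ℓ)`-pebble game with colors: add-edge moves cover the
new edge with a color present on both endpoints if one exists, and otherwise with the
highest-numbered color present; pebble-slide moves never create a monochromatic
cycle. -/
inductive CanStep (k ℓ : ℕ) : PGConfig V k → PGConfig V k → Prop
  | add (H : PGConfig V k) (v w : V) (c : Fin k)
      (hpeb : ℓ + 1 ≤ ∑ u ∈ ({v, w} : Finset V), (H.pebs u).card)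
      (hc : c ∈ H.pebs v)
      (hcanon : c ∈ H.pebs w ∨
        ((∀ c' : Fin k, c' ∈ H.pebs v → c' ∉ H.pebs w) ∧
          ∀ c' : Fin k, (c' ∈ H.pebs v ∨ c' ∈ H.pebs w) → c' ≤ c)) :
      CanStep k ℓ H (addEdgeCfg H v w c)
  | slide (H : PGConfig V k) (v w : V) (c c' : Fin k)
      (he : (v, w, c) ∈ H.edges)
      (hc : c' ∈ H.pebs w)
      (hnocycle : ∀ i : Fin k,
        HasCycle (monoEdges (slideCfg H v w c c') i) → HasCycle (monoEdges H i)) :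
      CanStep k ℓ H (slideCfg H v w c c')

/-- The graph obtained from a configuration by replacing every pebble lying on a
vertex by a loop at that vertex. -/
def withLoops [Fintype V] (H : PGConfig V k) : Multiset (Sym2 V) :=
  undirected H + Finset.univ.val.bind fun v => Multiset.replicate (H.pebs v).card s(v, v)

end PebbleGame
open PebbleGame

/-!
In a reachable configuration every vertex carries, for each colour, either a pebble of that
colour or exactly one out-edge of that colour. So the monochromatic component of a pebble of
colour `c` is an in-tree towards it, and reversing a path of that tree by slides of colour `c`
changes no monochromatic graph.

An arbitrary slide along `vw` is simulated as follows. The simulating configuration has the same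
underlying graph and pebble counts, hence the same out-degrees, so it has a directed path from `v`
to `w`: the vertices reachable from `v` are left by no edge there, hence by none in the simulated
configuration either. Take a pebble of colour `c` on `w` and the first vertex `h` of the path in
the `c`-component of `w`; bring the pebble to `h` along the tree, slide the path edge `uh` onto it
(no `c`-cycle arises since `u` lies outside the component), and recurse on the path from `v` to `u`.
-/

lemma Relation.ReflTransGen.exists_crossing {α : Type*} {R : α → α → Prop} {p : α → Prop}
    {a b : α} (hab : Relation.ReflTransGen R a b) (hb : p b) :
    p a ∨ ∃ u h, Relation.ReflTransGen (fun x y => R x y ∧ ¬ p x ∧ ¬ p y) a u ∧ ¬ p u ∧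
      R u h ∧ p h := by
  induction hab using Relation.ReflTransGen.head_induction_on with
  | refl => exact .inl hb
  | @head a c hac _ ih =>
    by_cases ha : p a
    · exact .inl ha
    by_cases hc : p c
    · exact .inr ⟨a, c, .refl, ha, hac, hc⟩
    obtain hc' | ⟨u, h, hcu, hu, huh, hh⟩ := ih
    · exact absurd hc' hc
    · exact .inr ⟨u, h, .head ⟨hac, ha, hc⟩ hcu, hu, huh, hh⟩

namespace PebbleGame

variable {V : Type} {k ℓ : ℕ}

lemma Conn.symm {F : Multiset (Sym2 V)} {a b : V} (h : Conn F a b) : Conn F b a :=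
  Relation.ReflTransGen.mono (fun x y (hxy : s(y, x) ∈ F) => by rwa [Sym2.eq_swap]) _ _
    (Relation.ReflTransGen.swap _ _ h)

lemma reflTransGen_of_mem_of_map_eq {L : Type*} {E F : Multiset (V × V × L)}
    (hund : E.map (fun e => s(e.1, e.2.1)) = F.map (fun e => s(e.1, e.2.1)))
    (hout : E.map Prod.fst = F.map Prod.fst) {v w : V} {γ : L} (he : (v, w, γ) ∈ E) :
    Relation.ReflTransGen (fun a b => ∃ γ, (a, b, γ) ∈ F) v w := by
  by_contra hvw
  -- `R` is closed under the edges of `F`; the two counts below transfer this to `E`.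
  set R := {u | Relation.ReflTransGen (fun a b => ∃ γ, (a, b, γ) ∈ F) v u}
  let P : V × V × L → Prop := fun e => e.1 ∈ R
  let Q : V × V × L → Prop := fun e => e.1 ∈ R ∧ e.2.1 ∈ R
  have hcardP : (E.filter P).card = (F.filter P).card := by
    have := congrArg (fun s => (s.filter (· ∈ R)).card) hout
    simpa [Multiset.filter_map] using this
  have hcardQ : (E.filter Q).card = (F.filter Q).card := by
    have := congrArg (fun s => (s.filter (fun z => ∀ y ∈ z, y ∈ R)).card) hund
    simpa [Multiset.filter_map] using this
  have hF : F.filter Q = F.filter P := Multiset.filter_congr fun e he =>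
    ⟨And.left, fun h => ⟨h, Relation.ReflTransGen.tail h ⟨e.2.2, he⟩⟩⟩
  have hE : E.filter Q = E.filter P :=
    Multiset.eq_of_le_of_card_le (Multiset.monotone_filter_right _ fun _ => And.left)
      (by rw [hcardP, hcardQ, hF])
  have hQ : (v, w, γ) ∈ E.filter Q := hE ▸ Multiset.mem_filter.mpr ⟨he, .refl⟩
  exact hvw (Multiset.mem_filter.mp hQ).2.2

lemma monoOf_cons (e : V × V × Fin k) (E : Multiset (V × V × Fin k)) (i : Fin k) :
    monoOf (e ::ₘ E) i = if e.2.2 = i then s(e.1, e.2.1) ::ₘ monoOf E i else monoOf E i := by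
  unfold monoOf
  split_ifs with h <;> simp [h]

lemma monoOf_mono {E E' : Multiset (V × V × Fin k)} (h : E ≤ E') (i : Fin k) :
    monoOf E i ≤ monoOf E' i :=
  Multiset.map_le_map (Multiset.filter_le_filter _ h)

lemma mk_mem_monoEdges_iff {C : PGConfig V k} {a b : V} {c : Fin k} :
    s(a, b) ∈ monoEdges C c ↔ (a, b, c) ∈ C.edges ∨ (b, a, c) ∈ C.edges := by
  simp only [monoEdges, Multiset.mem_map, Multiset.mem_filter, Prod.exists, Sym2.eq_iff]
  constructor
  · rintro ⟨x, y, i, ⟨he, rfl⟩, ⟨rfl, rfl⟩ | ⟨rfl, rfl⟩⟩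
    exacts [.inl he, .inr he]
  · rintro (he | he)
    exacts [⟨a, b, c, ⟨he, rfl⟩, .inl ⟨rfl, rfl⟩⟩, ⟨b, a, c, ⟨he, rfl⟩, .inr ⟨rfl, rfl⟩⟩]

variable [DecidableEq V]

lemma HasCycle.mono {F F' : Multiset (Sym2 V)} (hF : F ≤ F') (h : HasCycle F) : HasCycle F' :=
  let ⟨S, hS, hcard⟩ := h
  ⟨S, hS, hcard.trans (Multiset.card_le_card (Multiset.filter_le_filter _ hF))⟩

lemma card_spanned_eq_add {F : Multiset (Sym2 V)} {p : V → Prop}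
    (hp : ∀ a b, s(a, b) ∈ F → p a → p b) (S : Finset V) :
    (spanned F S).card =
      (spanned F (S.filter p)).card + (spanned F (S.filter fun a => ¬ p a)).card := by
  have hsplit := Multiset.filter_add_not (· ∈ (S.filter p).sym2) (spanned F S)
  rw [← hsplit, Multiset.card_add, spanned, spanned, spanned, Multiset.filter_filter,
    Multiset.filter_filter]
  congr 2 <;> refine Multiset.filter_congr fun e he => ?_ <;> induction e using Sym2.ind with
  | _ a b =>
    have hab := hp a b he
    have hba := hp b a (Sym2.eq_swap ▸ he)
    simp only [Finset.mk_mem_sym2_iff, Finset.mem_filter]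
    tauto

lemma HasCycle.of_cons {F : Multiset (Sym2 V)} {a b : V} (h : HasCycle (s(a, b) ::ₘ F))
    (hab : ¬ Conn F a b) : HasCycle F := by
  obtain ⟨S, hS, hcard⟩ := h
  by_cases hmem : s(a, b) ∈ S.sym2
  swap
  · exact ⟨S, hS, by rwa [spanned, Multiset.filter_cons_of_neg _ hmem] at hcard⟩
  rw [spanned, Multiset.filter_cons_of_pos _ hmem, Multiset.card_cons] at hcard
  obtain ⟨haS, hbS⟩ := Finset.mk_mem_sym2_iff.mp hmem
  have hsplit := card_spanned_eq_add (p := Conn F a)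
    (fun x y hxy hx => hx.tail hxy) S
  have hcardS := Finset.card_filter_add_card_filter_not (s := S) (Conn F a)
  have ha : a ∈ S.filter (Conn F a) := Finset.mem_filter.mpr ⟨haS, .refl⟩
  have hb : b ∈ S.filter (fun x => ¬ Conn F a x) := Finset.mem_filter.mpr ⟨hbS, hab⟩
  by_contra hF
  have hA : ¬ _ ≤ _ := fun h => hF ⟨_, ⟨a, ha⟩, h⟩
  have hB : ¬ _ ≤ _ := fun h => hF ⟨_, ⟨b, hb⟩, h⟩
  rw [← spanned] at hcard
  omega

lemma reflTransGen_restrict_erase {R : V → V → Prop} {S : Finset V} {x y z : V}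
    (h : Relation.ReflTransGen (fun a b => R a b ∧ a ∈ S ∧ b ∈ S) y z)
    (hx : ∀ b, ¬ R x b) (hz : z ≠ x) :
    Relation.ReflTransGen (fun a b => R a b ∧ a ∈ S.erase x ∧ b ∈ S.erase x) y z := by
  induction h with
  | refl => exact .refl
  | @tail a b _ hab ih =>
    have hax : a ≠ x := fun h => hx b (h ▸ hab.1)
    exact (ih hax).tail
      ⟨hab.1, Finset.mem_erase.mpr ⟨hax, hab.2.1⟩, Finset.mem_erase.mpr ⟨hz, hab.2.2⟩⟩

def outColors (E : Multiset (V × V × Fin k)) (x : V) : Multiset (Fin k) :=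
  (E.filter (·.1 = x)).map (·.2.2)

lemma outColors_cons (e : V × V × Fin k) (E : Multiset (V × V × Fin k)) (x : V) :
    outColors (e ::ₘ E) x = if e.1 = x then e.2.2 ::ₘ outColors E x else outColors E x := by
  unfold outColors
  split_ifs with h <;> simp [h]

lemma Step.pebs_add_outColors {A B : PGConfig V k} (h : Step k ℓ A B) (x : V) :
    B.pebs x + outColors B.edges x = A.pebs x + outColors A.edges x := by
  cases h with
  | add v w c _ hc =>
    simp only [addEdgeCfg, outColors_cons]
    rcases eq_or_ne x v with rfl | hxv
    · simp only [Function.update_self, ↓reduceIte, Multiset.add_cons]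
      rw [← Multiset.cons_add, Multiset.cons_erase hc]
    · simp [Function.update_of_ne hxv, Ne.symm hxv]
  | slide v w c c' he hc =>
    obtain ⟨E, hE⟩ : ∃ E, A.edges = (v, w, c) ::ₘ E := ⟨_, (Multiset.cons_erase he).symm⟩
    simp only [slideCfg, hE, Multiset.erase_cons_head, outColors_cons]
    rcases eq_or_ne x v with rfl | hxv <;> rcases eq_or_ne x w with rfl | hxw
    · simp only [Function.update_self, ↓reduceIte, Multiset.add_cons, Multiset.cons_add]
      rw [Multiset.cons_swap, ← Multiset.cons_add, Multiset.cons_erase hc]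
    · simp [Function.update_of_ne hxw, Ne.symm hxw, Multiset.add_cons]
    · simp only [Function.update_of_ne hxv, Function.update_self, ↓reduceIte, if_neg hxv.symm,
        Multiset.add_cons]
      rw [← Multiset.cons_add, Multiset.cons_erase hc]
    · simp [Function.update_of_ne hxv, Function.update_of_ne hxw, Ne.symm hxv, Ne.symm hxw]

section Slide

variable {H : PGConfig V k} {v w : V} {c c' : Fin k}

lemma edges_slideCfg_of_mem (he : (v, w, c) ∈ H.edges) :
    ∃ E, H.edges = (v, w, c) ::ₘ E ∧ (slideCfg H v w c c').edges = (w, v, c') ::ₘ E :=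
  ⟨_, (Multiset.cons_erase he).symm, rfl⟩

lemma undirected_slideCfg (he : (v, w, c) ∈ H.edges) :
    undirected (slideCfg H v w c c') = undirected H := by
  obtain ⟨E, hH, hslide⟩ := edges_slideCfg_of_mem (c' := c') he
  simp only [undirected, hH, hslide, Multiset.map_cons, Sym2.eq_swap]

lemma monoEdges_slideCfg_self (he : (v, w, c) ∈ H.edges) (i : Fin k) :
    monoEdges (slideCfg H v w c c) i = monoEdges H i := by
  obtain ⟨E, hH, hslide⟩ := edges_slideCfg_of_mem (c' := c) he
  change monoOf (slideCfg H v w c c).edges i = monoOf H.edges i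
  rw [hH, hslide, monoOf_cons, monoOf_cons, Sym2.eq_swap]

lemma monoEdges_slideCfg_le (i : Fin k) :
    monoEdges (slideCfg H v w c c') i ≤
      if c' = i then s(w, v) ::ₘ monoEdges H i else monoEdges H i := by
  have hle := monoOf_mono (Multiset.erase_le (v, w, c) H.edges) i
  change monoOf ((w, v, c') ::ₘ H.edges.erase (v, w, c)) i ≤ _
  rw [monoOf_cons]
  split_ifs
  exacts [Multiset.cons_le_cons _ hle, hle]

lemma mem_slideCfg_edges {e : V × V × Fin k} (he : e ∈ H.edges) (hne : e ≠ (v, w, c)) :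
    e ∈ (slideCfg H v w c c').edges :=
  Multiset.mem_cons_of_mem ((Multiset.mem_erase_of_ne hne).mpr he)

lemma mem_slideCfg_pebs : c ∈ (slideCfg H v w c c').pebs v := by
  simp [slideCfg]

end Slide

def PebbleMoved (B B' : PGConfig V k) (w v : V) : Prop :=
  ∀ z, (B'.pebs z).card + (if z = w then 1 else 0) = (B.pebs z).card + (if z = v then 1 else 0)

lemma PebbleMoved.refl (B : PGConfig V k) (v : V) : PebbleMoved B B v v := fun _ => rfl

lemma PebbleMoved.trans {B₁ B₂ B₃ : PGConfig V k} {u v w : V} (h₁₂ : PebbleMoved B₁ B₂ w u)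
    (h₂₃ : PebbleMoved B₂ B₃ u v) : PebbleMoved B₁ B₃ w v := fun z => by
  have := h₁₂ z
  have := h₂₃ z
  split_ifs at * <;> omega

lemma pebbleMoved_slideCfg {H : PGConfig V k} {v w : V} (c : Fin k) {c' : Fin k}
    (hc' : c' ∈ H.pebs w) : PebbleMoved H (slideCfg H v w c c') w v := fun z => by
  have hpos := Multiset.card_pos_iff_exists_mem.mpr ⟨c', hc'⟩
  simp only [slideCfg]
  rcases eq_or_ne z v with rfl | hzv <;> rcases eq_or_ne z w with rfl | hzw
  · simp [Multiset.card_erase_of_mem hc']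
    omega
  · simp [hzw]
  · simp [hzv, Multiset.card_erase_of_mem hc']
    omega
  · simp [hzv, hzw]

def CanonicalSlide (k : ℕ) (A B : PGConfig V k) : Prop :=
  SlideRel k A B ∧ ∀ i : Fin k, HasCycle (monoEdges B i) → HasCycle (monoEdges A i)

lemma canonicalSlide_self {H : PGConfig V k} {v w : V} {c : Fin k} (he : (v, w, c) ∈ H.edges)
    (hc : c ∈ H.pebs w) : CanonicalSlide k H (slideCfg H v w c c) :=
  ⟨⟨v, w, c, c, he, hc, rfl⟩, fun i => by rw [monoEdges_slideCfg_self he]; exact id⟩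

lemma canonicalSlide_of_not_conn {H : PGConfig V k} {v w : V} {c c' : Fin k}
    (he : (v, w, c) ∈ H.edges) (hc' : c' ∈ H.pebs w) (hwv : ¬ Conn (monoEdges H c') w v) :
    CanonicalSlide k H (slideCfg H v w c c') := by
  refine ⟨⟨v, w, c, c', he, hc', rfl⟩, fun i hcyc => ?_⟩
  have hle := monoEdges_slideCfg_le (H := H) (v := v) (w := w) (c := c) (c' := c') i
  split_ifs at hle with hi
  · subst hi
    exact (hcyc.mono hle).of_cons hwv
  · exact hcyc.mono hle

lemma SlideRel.step {A B : PGConfig V k} (h : SlideRel k A B) : Step k ℓ A B := by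
  obtain ⟨v, w, c, c', he, hc, rfl⟩ := h
  exact .slide A v w c c' he hc

lemma undirected_of_canonicalSlides {A B : PGConfig V k}
    (h : Relation.ReflTransGen (CanonicalSlide k) A B) : undirected B = undirected A := by
  induction h with
  | refl => rfl
  | tail _ hstep ih =>
    obtain ⟨⟨v, w, c, c', he, -, rfl⟩, -⟩ := hstep
    rw [undirected_slideCfg he, ih]

section Reachable

variable [Fintype V] {C : PGConfig V k}

lemma Reachable.pebs_add_outColors (hC : Reachable k ℓ C) (x : V) :
    C.pebs x + outColors C.edges x = (Finset.univ : Finset (Fin k)).val := by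
  induction hC with
  | refl => simp [initCfg, outColors]
  | tail _ hstep ih => rw [hstep.pebs_add_outColors, ih]

lemma Reachable.nodup_pebs_add_outColors (hC : Reachable k ℓ C) (x : V) :
    (C.pebs x + outColors C.edges x).Nodup := by
  rw [hC.pebs_add_outColors]
  exact Finset.univ.nodup

lemma Reachable.notMem_edges (hC : Reachable k ℓ C) {x : V} {c : Fin k} (hc : c ∈ C.pebs x)
    (y : V) : (x, y, c) ∉ C.edges := fun he =>
  Multiset.disjoint_left.mp (Multiset.nodup_add.mp (hC.nodup_pebs_add_outColors x)).2.2 hc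
    (Multiset.mem_map.mpr ⟨_, Multiset.mem_filter.mpr ⟨he, rfl⟩, rfl⟩)

lemma Reachable.eq_of_mem_edges (hC : Reachable k ℓ C) {x a b : V} {c : Fin k}
    (ha : (x, a, c) ∈ C.edges) (hb : (x, b, c) ∈ C.edges) : a = b := by
  have hnodup := (Multiset.nodup_add.mp (hC.nodup_pebs_add_outColors x)).2.1
  have h := Multiset.inj_on_of_nodup_map hnodup
    _ (Multiset.mem_filter.mpr ⟨ha, rfl⟩) _ (Multiset.mem_filter.mpr ⟨hb, rfl⟩) rfl
  simpa using h

lemma Reachable.card_pebs_add_count (hC : Reachable k ℓ C) (x : V) :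
    (C.pebs x).card + (C.edges.map Prod.fst).count x = k := by
  have h := congrArg Multiset.card (hC.pebs_add_outColors x)
  rwa [Multiset.card_add, Finset.card_val, Finset.card_univ, Fintype.card_fin, outColors,
    Multiset.card_map, Multiset.filter_congr fun _ _ => eq_comm, ← Multiset.count_map] at h

lemma Reachable.of_slides {A B : PGConfig V k} (hA : Reachable k ℓ A)
    (h : Relation.ReflTransGen (SlideRel k) A B) : Reachable k ℓ B :=
  hA.trans (Relation.ReflTransGen.mono (fun _ _ => SlideRel.step) _ _ h)

lemma Reachable.of_canonicalSlides {A B : PGConfig V k} (hA : Reachable k ℓ A)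
    (h : Relation.ReflTransGen (CanonicalSlide k) A B) : Reachable k ℓ B :=
  hA.of_slides (Relation.ReflTransGen.mono (fun _ _ => And.left) _ _ h)

lemma Reachable.reflTransGen_of_conn (hC : Reachable k ℓ C) {c : Fin k}
    {x y : V} (hx : c ∈ C.pebs x) (h : Conn (monoEdges C c) y x) :
    Relation.ReflTransGen (fun a b => (a, b, c) ∈ C.edges) y x := by
  induction h using Relation.ReflTransGen.head_induction_on with
  | refl => exact .refl
  | @head y z hyz _ ih =>
    rcases mk_mem_monoEdges_iff.mp hyz with hyz | hzy
    · exact ih.head hyz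
    · rcases ih.cases_head with rfl | ⟨z₁, hzz₁, hz₁x⟩
      · exact absurd hzy (hC.notMem_edges hx y)
      · rwa [hC.eq_of_mem_edges hzy hzz₁]

lemma Reachable.exists_reverse_monoPath {c : Fin k} {y : V} (S : Finset V) :
    ∀ {C : PGConfig V k} {x : V}, Reachable k ℓ C → c ∈ C.pebs x →
      Relation.ReflTransGen (fun a b => (a, b, c) ∈ C.edges ∧ a ∈ S ∧ b ∈ S) y x →
      ∃ C', Relation.ReflTransGen (CanonicalSlide k) C C' ∧
        (∀ i, monoEdges C' i = monoEdges C i) ∧ c ∈ C'.pebs y ∧ PebbleMoved C C' x y ∧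
        ∀ e ∈ C.edges, ¬ Conn (monoEdges C c) x e.1 → e ∈ C'.edges := by
  induction S using Finset.strongInduction with
  | H S ih =>
  intro C x hC hx hpath
  rcases hpath.cases_tail with rfl | ⟨z, hyz, hzx, -, hxS⟩
  · exact ⟨C, .refl, fun _ => rfl, hx, .refl C _, fun e he _ => he⟩
  have hzx' : z ≠ x := by
    rintro rfl
    exact hC.notMem_edges hx _ hzx
  have hstep : CanonicalSlide k C (slideCfg C z x c c) := canonicalSlide_self hzx hx
  -- the rest of the path avoids `x`, which has no out-edge of colour `c`
  have hpath₁ : Relation.ReflTransGen (fun a b => (a, b, c) ∈ (slideCfg C z x c c).edges ∧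
      a ∈ S.erase x ∧ b ∈ S.erase x) y z :=
    Relation.ReflTransGen.mono (fun a b hab => ⟨mem_slideCfg_edges hab.1
      (fun h => (Finset.mem_erase.mp hab.2.2).1 (congrArg (·.2.1) h)), hab.2⟩) _ _
      (reflTransGen_restrict_erase hyz (hC.notMem_edges hx) hzx')
  obtain ⟨C', hC', hmono', hy, hmoved, hkeep⟩ := ih _ (Finset.erase_ssubset hxS)
    (hC.tail hstep.1.step) mem_slideCfg_pebs hpath₁
  have hxz : Conn (monoEdges C c) x z := Conn.symm (.single (mk_mem_monoEdges_iff.mpr (.inl hzx)))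
  refine ⟨C', .head hstep hC', fun i => (hmono' i).trans (monoEdges_slideCfg_self hzx i), hy,
    (pebbleMoved_slideCfg c hx).trans hmoved, fun e he hxe => hkeep e ?_ ?_⟩
  · refine mem_slideCfg_edges he ?_
    rintro rfl
    exact hxe hxz
  · rw [monoEdges_slideCfg_self hzx]
    exact fun hze => hxe (hxz.trans hze)

lemma Reachable.exists_canonicalSlides_of_conn {B : PGConfig V k} (hB : Reachable k ℓ B)
    {c : Fin k} {v w : V} (hc : c ∈ B.pebs w) (hv : Conn (monoEdges B c) w v) :
    ∃ B', Relation.ReflTransGen (CanonicalSlide k) B B' ∧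
      (∀ i, monoEdges B' i = monoEdges B i) ∧ c ∈ B'.pebs v ∧ PebbleMoved B B' w v ∧
      ∀ e ∈ B.edges, ¬ Conn (monoEdges B c) w e.1 → e ∈ B'.edges :=
  exists_reverse_monoPath Finset.univ hB hc (Relation.ReflTransGen.mono
    (fun _ _ h => ⟨h, Finset.mem_univ _, Finset.mem_univ _⟩) _ _
    (hB.reflTransGen_of_conn hc hv.symm))

lemma Reachable.exists_canonicalSlides_of_edge_into_conn {B : PGConfig V k} (hB : Reachable k ℓ B)
    {c γ : Fin k} {u h w : V} (hc : c ∈ B.pebs w) (he : (u, h, γ) ∈ B.edges)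
    (hh : Conn (monoEdges B c) w h) (hu : ¬ Conn (monoEdges B c) w u) :
    ∃ B', Relation.ReflTransGen (CanonicalSlide k) B B' ∧ γ ∈ B'.pebs u ∧
      PebbleMoved B B' w u ∧ ∀ e ∈ B.edges, ¬ Conn (monoEdges B c) w e.1 →
        ¬ Conn (monoEdges B c) w e.2.1 → e ∈ B'.edges := by
  obtain ⟨B₁, hB₁, hmono, hc₁, hmoved, hkeep⟩ := hB.exists_canonicalSlides_of_conn hc hh
  have hstep : CanonicalSlide k B₁ (slideCfg B₁ u h γ c) :=
    canonicalSlide_of_not_conn (hkeep _ he hu) hc₁ (by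
      rw [hmono]
      exact fun hhu => hu (hh.trans hhu))
  refine ⟨_, hB₁.tail hstep, mem_slideCfg_pebs, hmoved.trans (pebbleMoved_slideCfg γ hc₁),
    fun e he' he₁ he₂ => mem_slideCfg_edges (hkeep e he' he₁) ?_⟩
  rintro rfl
  exact he₂ hh

lemma Reachable.exists_canonicalSlides_of_path {v : V} (S : Finset V) :
    ∀ {B : PGConfig V k} {w : V}, Reachable k ℓ B → B.pebs w ≠ 0 →
      Relation.ReflTransGen (fun a b => (∃ γ, (a, b, γ) ∈ B.edges) ∧ a ∈ S ∧ b ∈ S) v w →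
      ∃ B', Relation.ReflTransGen (CanonicalSlide k) B B' ∧ PebbleMoved B B' w v := by
  induction S using Finset.strongInduction with
  | H S ih =>
  intro B w hB hw hpath
  obtain ⟨c, hc⟩ := Multiset.exists_mem_of_ne_zero hw
  obtain hv | ⟨u, h, hvu, hu, ⟨⟨γ, huh⟩, -, hhS⟩, hh⟩ :=
    hpath.exists_crossing (p := Conn (monoEdges B c) w) .refl
  · obtain ⟨B', hB', -, -, hmoved, -⟩ := hB.exists_canonicalSlides_of_conn hc hv
    exact ⟨B', hB', hmoved⟩
  obtain ⟨B₁, hB₁, hu₁, hmoved₁, hkeep⟩ := hB.exists_canonicalSlides_of_edge_into_conn hc huh hh hu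
  have hpath₁ : Relation.ReflTransGen (fun a b => (∃ γ, (a, b, γ) ∈ B₁.edges) ∧
      a ∈ S.filter (¬ Conn (monoEdges B c) w ·) ∧ b ∈ S.filter (¬ Conn (monoEdges B c) w ·)) v u :=
    Relation.ReflTransGen.mono (fun a b ⟨⟨⟨γ, hab⟩, haS, hbS⟩, ha, hb⟩ =>
      ⟨⟨γ, hkeep _ hab ha hb⟩, Finset.mem_filter.mpr ⟨haS, ha⟩, Finset.mem_filter.mpr ⟨hbS, hb⟩⟩)
      _ _ hvu
  obtain ⟨B₂, hB₂, hmoved₂⟩ := ih _ (Finset.filter_ssubset.mpr ⟨h, hhS, not_not.mpr hh⟩)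
    (hB.of_canonicalSlides hB₁) (fun h0 => Multiset.notMem_zero γ (h0 ▸ hu₁)) hpath₁
  exact ⟨B₂, hB₁.trans hB₂, hmoved₁.trans hmoved₂⟩

lemma Reachable.exists_canonicalSlides_of_slides {H A : PGConfig V k} (hH : Reachable k ℓ H)
    (hHA : Relation.ReflTransGen (SlideRel k) H A) :
    ∃ B, Relation.ReflTransGen (CanonicalSlide k) H B ∧ undirected B = undirected A ∧
      ∀ z, (B.pebs z).card = (A.pebs z).card := by
  induction hHA with
  | refl => exact ⟨H, .refl, rfl, fun _ => rfl⟩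
  | @tail A A' hHA hAA' ih =>
    obtain ⟨B, hHB, hund, hcard⟩ := ih
    obtain ⟨v, w, c, c', he, hc', rfl⟩ := hAA'
    have hA := hH.of_slides hHA
    have hB := hH.of_canonicalSlides hHB
    have hout : A.edges.map Prod.fst = B.edges.map Prod.fst := Multiset.ext.mpr fun x => by
      have := hA.card_pebs_add_count x
      have := hB.card_pebs_add_count x
      have := hcard x
      omega
    have hw : B.pebs w ≠ 0 := by
      rw [← Multiset.card_pos, hcard w]
      exact Multiset.card_pos_iff_exists_mem.mpr ⟨c', hc'⟩
    obtain ⟨B', hBB', hmoved⟩ := hB.exists_canonicalSlides_of_path Finset.univ hw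
      (Relation.ReflTransGen.mono (fun _ _ h => ⟨h, Finset.mem_univ _, Finset.mem_univ _⟩) _ _
        (reflTransGen_of_mem_of_map_eq hund.symm hout he))
    refine ⟨B', hHB.trans hBB', ?_, fun z => ?_⟩
    · rw [undirected_of_canonicalSlides hBB', hund, undirected_slideCfg he]
    · have := hmoved z
      have := pebbleMoved_slideCfg (v := v) c hc' z
      have := hcard z
      omega

end Reachable

end PebbleGame

theorem canonical_pebble_slide_general {V : Type} [Fintype V] [DecidableEq V]
    (k ℓ : ℕ) (H H' : PGConfig V k)
    (hH : Reachable k ℓ H)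
    (hslides : Relation.ReflTransGen (SlideRel k) H H') (v w : V)
    (hadd : ℓ + 1 ≤ ∑ u ∈ ({v, w} : Finset V), (H'.pebs u).card) :
    ∃ H'' : PGConfig V k,
      Relation.ReflTransGen
        (fun A B => SlideRel k A B ∧
          ∀ i : Fin k, HasCycle (monoEdges B i) → HasCycle (monoEdges A i)) H H'' ∧
      ℓ + 1 ≤ ∑ u ∈ ({v, w} : Finset V), (H''.pebs u).card := by
  obtain ⟨H'', hslides', -, hcard⟩ := hH.exists_canonicalSlides_of_slides hslides
  exact ⟨H'', hslides', by simpa only [hcard] using hadd⟩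

/-- the canonical pebble-slide move: any sequence of pebble-slide moves
from a reachable configuration that makes a given add-edge move possible (collects at
least `ℓ+1` pebbles on the endpoints of the edge to be added) can be replaced by a
sequence of pebble-slide moves from the same configuration, none of which creates a
monochromatic cycle, after which the same add-edge move is possible. -/
theorem canonical_pebble_slide {V : Type} [Fintype V] [DecidableEq V]
    (k ℓ : ℕ) (hk : 1 ≤ k) (hℓ : ℓ ≤ 2 * k - 1) (H H' : PGConfig V k)
    (hH : Reachable k ℓ H)
    (hslides : Relation.ReflTransGen (SlideRel k) H H') (v w : V)
    (hadd : ℓ + 1 ≤ ∑ u ∈ ({v, w} : Finset V), (H'.pebs u).card) :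
    ∃ H'' : PGConfig V k,
      Relation.ReflTransGen
        (fun A B => SlideRel k A B ∧
          ∀ i : Fin k, HasCycle (monoEdges B i) → HasCycle (monoEdges A i)) H H'' ∧
      ℓ + 1 ≤ ∑ u ∈ ({v, w} : Finset V), (H''.pebs u).card :=
  canonical_pebble_slide_general k ℓ H H' hH hslides v w hadd
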